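/- arXiv:2107.08385 — 2 statements merged into one kernel-verified Lean document; each statement's English description precedes it below -/
import Mathlib

section
/- Suppose (λ, σ, u) ∈ ℝ × H × H is an eigenpair of the modified mixed formulation, i.e. −a(σ, ψ) + b(ψ, u) = 0 for all ψ ∈ H and b(σ, v) = λ⟨u, v⟩ for all v ∈ H. Then for every ψ ∈ H and every v ∈ H with v ≠ 0, the Rayleigh quotient λ^R(ψ, v) = (−a_h(ψ, ψ) + 2 b(ψ, v)) / ⟨v, v⟩ satisfies the identity: λ^R(ψ, v) − λ = (−a(ψ − σ, ψ − σ) + 2 b(ψ − σ, v − u)) / ⟨v, v⟩ − λ⟨v − u, v − u⟩ / ⟨v, v⟩ − ⟨c(ψ)ξ − c_h(ψ)ξ_h, ψ⟩ / ⟨v, v⟩. -/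
/-!
Up to the factor `⟨v, v⟩`, the Rayleigh quotient minus `λ` is the Lagrangian
`J(ψ, v) = -a(ψ, ψ) + 2 b(ψ, v) - λ ⟨v, v⟩` of the mixed problem, except that it is built with `a_h`
instead of `a`; the difference `a_h(ψ, ψ) - a(ψ, ψ)` is the last term of the identity. Since `a` is
symmetric, `J` is a quadratic functional whose critical points are exactly the eigenpairs with
eigenvalue `λ`, and its value at an eigenpair vanishes. Hence the Taylor expansion of `J` around
`(σ, u)` reduces to its quadratic part: `J(ψ, v) = J(ψ - σ, v - u)`. Symmetry of `a` comes from
`a(w, ψ) = ⟨P w, ψ⟩` with `P` the orthogonal projection onto `ξ^⊥`.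
-/

open RealInnerProductSpace

section

open LinearMap (BilinForm)

variable {R M : Type*} [CommRing R] [AddCommGroup M] [Module R M]

def mixedLagrangian (A B m : BilinForm R M) (lam : R) (ψ v : M) : R :=
  -A ψ ψ + 2 * B ψ v - lam * m v v

theorem mixedLagrangian_sub_eq {A B m : BilinForm R M} (hA : A.IsSymm) (hm : m.IsSymm)
    {lam : R} {σ u : M} (h₁ : ∀ ψ, -A σ ψ + B ψ u = 0) (h₂ : ∀ v, B σ v = lam * m u v)
    (ψ v : M) :
    mixedLagrangian A B m lam (ψ - σ) (v - u) = mixedLagrangian A B m lam ψ v := by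
  simp only [mixedLagrangian, map_sub, LinearMap.sub_apply]
  linear_combination -2 * h₁ ψ + h₁ σ - hA.eq σ ψ - 2 * h₂ v + h₂ u - lam * hm.eq u v

end

section

variable {H : Type*} [NormedAddCommGroup H] [InnerProductSpace ℝ H]

theorem isSymm_innerₗ_comp {T : H →ₗ[ℝ] H} (hT : T.IsSymmetric) :
    LinearMap.BilinForm.IsSymm (innerₗ H ∘ₗ T) :=
  ⟨fun x y => by simpa [real_inner_comm] using hT x y⟩

theorem inner_starProjection_orthogonal_singleton (ξ w ψ : H) :
    ⟪(ℝ ∙ ξ)ᗮ.starProjection w, ψ⟫ = ⟪w, ψ⟫ - ⟪w, ξ⟫ / ‖ξ‖ ^ 2 * ⟪ξ, ψ⟫ := by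
  rw [Submodule.starProjection_orthogonal_val, Submodule.starProjection_singleton,
    inner_sub_left, real_inner_smul_left, real_inner_comm ξ w]
  rfl

end

theorem rayleigh_quotient_identity_general
    {H : Type*} [NormedAddCommGroup H] [InnerProductSpace ℝ H]
    (ξ ξh : H)
    (c ch : H → ℝ)
    (hc : ∀ w, c w = ⟪w, ξ⟫ / ‖ξ‖ ^ 2)
    (a ah : H → H → ℝ)
    (ha : ∀ w ψ, a w ψ = ⟪w, ψ⟫ - c w * ⟪ξ, ψ⟫)
    (hah : ∀ w ψ, ah w ψ = ⟪w, ψ⟫ - ch w * ⟪ξh, ψ⟫)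
    (b : H →ₗ[ℝ] H →ₗ[ℝ] ℝ)
    (lam : ℝ) (σ u : H)
    (heig₁ : ∀ ψ : H, -(a σ ψ) + b ψ u = 0)
    (heig₂ : ∀ v : H, b σ v = lam * ⟪u, v⟫)
    (ψ v : H) (hv : v ≠ 0) :
    (-(ah ψ ψ) + 2 * b ψ v) / ⟪v, v⟫ - lam =
      (-(a (ψ - σ) (ψ - σ)) + 2 * b (ψ - σ) (v - u)) / ⟪v, v⟫
        - lam * ⟪v - u, v - u⟫ / ⟪v, v⟫
        - ⟪c ψ • ξ - ch ψ • ξh, ψ⟫ / ⟪v, v⟫ := by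
  obtain ⟨A, hA, ha_eq⟩ : ∃ A : LinearMap.BilinForm ℝ H, A.IsSymm ∧ ∀ w ψ, a w ψ = A w ψ :=
    ⟨innerₗ H ∘ₗ ((ℝ ∙ ξ)ᗮ.starProjection : H →ₗ[ℝ] H),
      isSymm_innerₗ_comp (Submodule.starProjection_isSymmetric _), fun w ψ => by
        rw [ha, hc, LinearMap.comp_apply, innerₗ_apply_apply, ContinuousLinearMap.coe_coe,
          inner_starProjection_orthogonal_singleton]⟩
  have hJ := mixedLagrangian_sub_eq (B := b) hA (LinearMap.BilinForm.isSymm_iff.mpr isSymm_inner)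
    (fun ψ => ha_eq σ ψ ▸ heig₁ ψ) heig₂ ψ v
  simp only [mixedLagrangian, ← ha_eq, innerₗ_apply_apply] at hJ
  have hdefect : ⟪c ψ • ξ - ch ψ • ξh, ψ⟫ = ah ψ ψ - a ψ ψ := by
    simp only [inner_sub_left, real_inner_smul_left, ha, hah]
    ring
  have hvv : ⟪v, v⟫ ≠ 0 := inner_self_ne_zero.mpr hv
  rw [hdefect]
  field_simp
  linear_combination -hJ

/-- Rayleigh quotient identity for the modified mixed eigenvalue formulation. -/
theorem rayleigh_quotient_identity
    {H : Type*} [NormedAddCommGroup H] [InnerProductSpace ℝ H]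
    (ξ ξh : H) (hξ : ξ ≠ 0) (hξh : ξh ≠ 0)
    (c ch : H → ℝ)
    (hc : ∀ w, c w = ⟪w, ξ⟫ / ‖ξ‖ ^ 2)
    (hch : ∀ w, ch w = ⟪w, ξh⟫ / ‖ξh‖ ^ 2)
    (a ah : H → H → ℝ)
    (ha : ∀ w ψ, a w ψ = ⟪w, ψ⟫ - c w * ⟪ξ, ψ⟫)
    (hah : ∀ w ψ, ah w ψ = ⟪w, ψ⟫ - ch w * ⟪ξh, ψ⟫)
    (b : H →ₗ[ℝ] H →ₗ[ℝ] ℝ)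
    (lam : ℝ) (σ u : H)
    (heig₁ : ∀ ψ : H, -(a σ ψ) + b ψ u = 0)
    (heig₂ : ∀ v : H, b σ v = lam * ⟪u, v⟫)
    (ψ v : H) (hv : v ≠ 0) :
    (-(ah ψ ψ) + 2 * b ψ v) / ⟪v, v⟫ - lam =
      (-(a (ψ - σ) (ψ - σ)) + 2 * b (ψ - σ) (v - u)) / ⟪v, v⟫
        - lam * ⟪v - u, v - u⟫ / ⟪v, v⟫
        - ⟪c ψ • ξ - ch ψ • ξh, ψ⟫ / ⟪v, v⟫ :=
  rayleigh_quotient_identity_general ξ ξh c ch hc a ah ha hah b lam σ u heig₁ heig₂ ψ v hv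
end

section
/- Suppose (λ, σ, u) ∈ ℝ × H × H is an eigenpair of the modified mixed formulation, i.e. −a(σ, ψ) + b(ψ, u) = 0 for all ψ ∈ H and b(σ, v) = λ⟨u, v⟩ for all v ∈ H, and suppose (λ_h, σ_h, u_h) ∈ ℝ × V_h × V_h is a discrete eigenpair, i.e. −a_h(σ_h, ψ_h) + b(ψ_h, u_h) = 0 for all ψ_h ∈ V_h and b(σ_h, v_h) = λ_h⟨u_h, v_h⟩ for all v_h ∈ V_h, with ‖u_h‖ = 1. Then the eigenvalue error satisfies the identity λ_h − λ = −a(σ_h − σ, σ_h − σ) + 2 b(σ_h − σ, u_h − u) − λ‖u_h − u‖² − ⟨c(σ_h)ξ − c_h(σ_h)ξ_h, σ_h⟩. -/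
/-!
With `P` the orthogonal projection onto `(ℝ ∙ ξ)ᗮ`, `a(w, ψ) = ⟪P w, ψ⟫` is a symmetric bilinear
form. Testing the continuous equations with `σ`, `σ_h`, `u_h` and the discrete ones with `σ_h`,
`u_h` gives `a(σ, σ) = λ ‖u‖²`, `b(σ_h, u) = a(σ, σ_h)`, `b(σ, u_h) = λ ⟪u, u_h⟫` and
`b(σ_h, u_h) = a_h(σ_h, σ_h) = λ_h`. Expanding the right-hand side by bilinearity, everything
cancels except `λ_h - λ` and the consistency error `a(σ_h, σ_h) - a_h(σ_h, σ_h)`, which is the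
last term.
-/

open RealInnerProductSpace

section

variable {H : Type*} [NormedAddCommGroup H] [InnerProductSpace ℝ H]

theorem LinearMap.BilinForm.IsSymm.apply_sub_sub {B : LinearMap.BilinForm ℝ H} (hB : B.IsSymm)
    (x y : H) : B (x - y) (x - y) = B x x - 2 * B y x + B y y := by
  simp only [map_sub, LinearMap.sub_apply, hB.eq x y]
  ring

/-- The paper's form `a`, `a(w, ψ) = ⟪w - c(w) ξ, ψ⟫`, written through the orthogonal projection
onto `(ℝ ∙ ξ)ᗮ`. -/
noncomputable def deflatedInner (ξ : H) : LinearMap.BilinForm ℝ H :=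
  LinearMap.BilinForm.compLeft (innerₗ H) (ℝ ∙ ξ)ᗮ.starProjection

theorem deflatedInner_apply (ξ w ψ : H) :
    deflatedInner ξ w ψ = ⟪(ℝ ∙ ξ)ᗮ.starProjection w, ψ⟫ :=
  rfl

theorem deflatedInner_apply_eq_inner_sub (ξ w ψ : H) :
    deflatedInner ξ w ψ = ⟪w, ψ⟫ - ⟪w, ξ⟫ / ‖ξ‖ ^ 2 * ⟪ξ, ψ⟫ := by
  rw [deflatedInner_apply, Submodule.starProjection_orthogonal_val,
    Submodule.starProjection_singleton, inner_sub_left, real_inner_smul_left, real_inner_comm w]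
  rfl

theorem isSymm_deflatedInner (ξ : H) : (deflatedInner ξ).IsSymm :=
  ⟨fun w ψ => by
    rw [deflatedInner_apply, deflatedInner_apply, Submodule.inner_starProjection_left_eq_right,
      real_inner_comm]⟩

theorem deflatedInner_self_sub_deflatedInner_self (ξ ξ' w : H) :
    deflatedInner ξ w w - deflatedInner ξ' w w
      = -⟪(⟪w, ξ⟫ / ‖ξ‖ ^ 2) • ξ - (⟪w, ξ'⟫ / ‖ξ'‖ ^ 2) • ξ', w⟫ := by
  rw [deflatedInner_apply_eq_inner_sub, deflatedInner_apply_eq_inner_sub, inner_sub_left,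
    real_inner_smul_left, real_inner_smul_left]
  ring

theorem eigenvalue_sub_eq_of_mixed {a : LinearMap.BilinForm ℝ H} (ha : a.IsSymm)
    (b : H →ₗ[ℝ] H →ₗ[ℝ] ℝ) {lam lamh : ℝ} {σ u σh uh : H}
    (heig₁ : ∀ ψ, b ψ u = a σ ψ) (heig₂ : ∀ v, b σ v = lam * ⟪u, v⟫)
    (hlamh : b σh uh = lamh) (huh : ‖uh‖ = 1) :
    lamh - lam = -a (σh - σ) (σh - σ) + 2 * b (σh - σ) (uh - u) - lam * ‖uh - u‖ ^ 2
      + (a σh σh - lamh) := by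
  have hσ : a σ σ = lam * ‖u‖ ^ 2 := by
    rw [← heig₁, heig₂, real_inner_self_eq_norm_sq]
  have hb : b (σh - σ) (uh - u) = lamh - a σ σh - lam * ⟪u, uh⟫ + a σ σ := by
    simp only [map_sub, LinearMap.sub_apply, hlamh, heig₁, heig₂]
    ring
  have hu : ‖uh - u‖ ^ 2 = 1 - 2 * ⟪u, uh⟫ + ‖u‖ ^ 2 := by
    rw [norm_sub_sq_real, huh, real_inner_comm]
    ring
  rw [ha.apply_sub_sub, hb, hu, hσ]
  ring

end

theorem eigenvalue_error_identity_general
    {H : Type*} [NormedAddCommGroup H] [InnerProductSpace ℝ H]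
    (ξ ξh : H)
    (c ch : H → ℝ)
    (hc : ∀ w, c w = ⟪w, ξ⟫ / ‖ξ‖ ^ 2)
    (hch : ∀ w, ch w = ⟪w, ξh⟫ / ‖ξh‖ ^ 2)
    (a ah : H → H → ℝ)
    (ha : ∀ w ψ, a w ψ = ⟪w, ψ⟫ - c w * ⟪ξ, ψ⟫)
    (hah : ∀ w ψ, ah w ψ = ⟪w, ψ⟫ - ch w * ⟪ξh, ψ⟫)
    (b : H →ₗ[ℝ] H →ₗ[ℝ] ℝ)
    (Vh : Submodule ℝ H)
    (lam : ℝ) (σ u : H)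
    (heig₁ : ∀ ψ : H, -(a σ ψ) + b ψ u = 0)
    (heig₂ : ∀ v : H, b σ v = lam * ⟪u, v⟫)
    (lamh : ℝ) (σh uh : H) (hσh : σh ∈ Vh) (huh : uh ∈ Vh)
    (heigh₁ : ∀ ψh ∈ Vh, -(ah σh ψh) + b ψh uh = 0)
    (heigh₂ : ∀ vh ∈ Vh, b σh vh = lamh * ⟪uh, vh⟫)
    (hnorm : ‖uh‖ = 1) :
    lamh - lam =
      -(a (σh - σ) (σh - σ)) + 2 * b (σh - σ) (uh - u)
        - lam * ‖uh - u‖ ^ 2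
        - ⟪c σh • ξ - ch σh • ξh, σh⟫ := by
  have ha_eq : ∀ w ψ, a w ψ = deflatedInner ξ w ψ := fun w ψ => by
    rw [ha, hc, deflatedInner_apply_eq_inner_sub]
  have hah_eq : ∀ w ψ, ah w ψ = deflatedInner ξh w ψ := fun w ψ => by
    rw [hah, hch, deflatedInner_apply_eq_inner_sub]
  have hlamh : b σh uh = lamh := by
    rw [heigh₂ uh huh, real_inner_self_eq_norm_sq, hnorm, one_pow, mul_one]
  have hah_self : deflatedInner ξh σh σh = lamh := by
    linarith [heigh₁ σh hσh, hah_eq σh σh]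
  rw [eigenvalue_sub_eq_of_mixed (isSymm_deflatedInner ξ) b
      (fun ψ => by linarith [heig₁ ψ, ha_eq σ ψ]) heig₂ hlamh hnorm,
    ← hah_self, deflatedInner_self_sub_deflatedInner_self, ha_eq, hc, hch]
  ring

/-- Eigenvalue error identity: λ_h − λ in terms of eigenfunction errors. -/
theorem eigenvalue_error_identity
    {H : Type*} [NormedAddCommGroup H] [InnerProductSpace ℝ H]
    (ξ ξh : H) (hξ : ξ ≠ 0) (hξh : ξh ≠ 0)
    (c ch : H → ℝ)
    (hc : ∀ w, c w = ⟪w, ξ⟫ / ‖ξ‖ ^ 2)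
    (hch : ∀ w, ch w = ⟪w, ξh⟫ / ‖ξh‖ ^ 2)
    (a ah : H → H → ℝ)
    (ha : ∀ w ψ, a w ψ = ⟪w, ψ⟫ - c w * ⟪ξ, ψ⟫)
    (hah : ∀ w ψ, ah w ψ = ⟪w, ψ⟫ - ch w * ⟪ξh, ψ⟫)
    (b : H →ₗ[ℝ] H →ₗ[ℝ] ℝ)
    (Vh : Submodule ℝ H)
    (lam : ℝ) (σ u : H)
    (heig₁ : ∀ ψ : H, -(a σ ψ) + b ψ u = 0)
    (heig₂ : ∀ v : H, b σ v = lam * ⟪u, v⟫)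
    (lamh : ℝ) (σh uh : H) (hσh : σh ∈ Vh) (huh : uh ∈ Vh)
    (heigh₁ : ∀ ψh ∈ Vh, -(ah σh ψh) + b ψh uh = 0)
    (heigh₂ : ∀ vh ∈ Vh, b σh vh = lamh * ⟪uh, vh⟫)
    (hnorm : ‖uh‖ = 1) :
    lamh - lam =
      -(a (σh - σ) (σh - σ)) + 2 * b (σh - σ) (uh - u)
        - lam * ‖uh - u‖ ^ 2
        - ⟪c σh • ξ - ch σh • ξh, σh⟫ :=
  eigenvalue_error_identity_general ξ ξh c ch hc hch a ah ha hah b Vh lam σ u heig₁ heig₂ lamh σh uh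
    hσh huh heigh₁ heigh₂ hnorm
end
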